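/- The 5-dimensional algebra A₁₃₃(λ) over ℂ with nonzero products e₁e₁ = e₃ + λe₅, e₁e₂ = e₃, e₂e₁ = e₄, e₂e₂ = e₅ is 2-step nilpotent, its square equals span(e₃, e₄, e₅) (dimension 3), and its annihilator equals its square. -/

import Mathlib

open Module

/-- Structure constants of the algebra `A₁₃₃(λ)` (basis `e₁,…,e₅`, 0-indexed):
`e₁e₁ = e₃ + λe₅, e₁e₂ = e₃, e₂e₁ = e₄, e₂e₂ = e₅`, all other products zero. -/
noncomputable def cA (lam : ℂ) : Fin 5 → Fin 5 → Fin 5 → ℂ := fun i j m =>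
  if i = 0 ∧ j = 0 ∧ m = 2 then 1
  else if i = 0 ∧ j = 0 ∧ m = 4 then lam
  else if i = 0 ∧ j = 1 ∧ m = 2 then 1
  else if i = 1 ∧ j = 0 ∧ m = 3 then 1
  else if i = 1 ∧ j = 1 ∧ m = 4 then 1
  else 0

/-- The multiplication of `A₁₃₃(λ)` on `ℂ⁵`. -/
noncomputable def mul133 (lam : ℂ) (x y : Fin 5 → ℂ) : Fin 5 → ℂ :=
  fun m => ∑ i, ∑ j, x i * y j * cA lam i j m

/-- The square of `A₁₃₃(λ)`: the span of all products. -/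
noncomputable def square133 (lam : ℂ) : Submodule ℂ (Fin 5 → ℂ) :=
  Submodule.span ℂ {z : Fin 5 → ℂ | ∃ x y : Fin 5 → ℂ, mul133 lam x y = z}

/-! Only the `e₁, e₂` coordinates of the factors enter a product, and every product has vanishing
`e₁, e₂` coordinates: it lies in `span(e₃, e₄, e₅) = {x | x₀ = x₁ = 0}`. That span therefore
annihilates the whole algebra, which gives 2-step nilpotency; it is spanned by the products
`e₁e₂, e₂e₁, e₂e₂`, so it is the square; and since `a e₁` has `e₃, e₄` coordinates `a₀, a₁`,
nothing outside it annihilates `e₁`. -/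

section PiSingle

variable {R ι : Type*} [Finite ι] [DecidableEq ι]

theorem mem_span_image_piSingle_one_iff [Semiring R] {s : Set ι} {x : ι → R} :
    x ∈ Submodule.span R ((fun i => Pi.single i (1 : R)) '' s) ↔ ∀ i ∉ s, x i = 0 := by
  have hb : (fun i => Pi.single i (1 : R)) = ⇑(Pi.basisFun R ι) := by ext; simp
  rw [hb, Basis.mem_span_image]
  simp only [Set.subset_def, Finset.mem_coe, Finsupp.mem_support_iff, Pi.basisFun_repr]
  exact forall_congr' fun _ => not_imp_comm

theorem finrank_span_image_piSingle_one [CommRing R] [Nontrivial R] (s : Finset ι) :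
    finrank R (Submodule.span R ((fun i => Pi.single i (1 : R)) '' (s : Set ι))) = s.card := by
  have hli : LinearIndependent R fun i : s => (Pi.single i.1 1 : ι → R) := by
    simpa [Function.comp_def] using
      (Pi.basisFun R ι).linearIndependent.comp _ Subtype.val_injective
  rw [Set.image_eq_range]
  exact (finrank_span_eq_card hli).trans (Fintype.card_coe s)

end PiSingle

section A133

variable (lam : ℂ)

theorem mul133_eq (x y : Fin 5 → ℂ) :
    mul133 lam x y = ![0, 0, x 0 * y 0 + x 0 * y 1, x 1 * y 0, lam * (x 0 * y 0) + x 1 * y 1] := by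
  ext m
  fin_cases m <;> simp [mul133, cA, Fin.sum_univ_five]
  ring

theorem mul133_apply_zero (x y : Fin 5 → ℂ) : mul133 lam x y 0 = 0 := by
  simp [mul133_eq]

theorem mul133_apply_one (x y : Fin 5 → ℂ) : mul133 lam x y 1 = 0 := by
  simp [mul133_eq]

theorem mul133_eq_zero_of_left {a : Fin 5 → ℂ} (h0 : a 0 = 0) (h1 : a 1 = 0) (x : Fin 5 → ℂ) :
    mul133 lam a x = 0 := by
  ext m
  fin_cases m <;> simp [mul133_eq, h0, h1]

theorem mul133_eq_zero_of_right {a : Fin 5 → ℂ} (h0 : a 0 = 0) (h1 : a 1 = 0) (x : Fin 5 → ℂ) :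
    mul133 lam x a = 0 := by
  ext m
  fin_cases m <;> simp [mul133_eq, h0, h1]

theorem forall_mul133_eq_zero_iff {a : Fin 5 → ℂ} :
    (∀ x, mul133 lam a x = 0 ∧ mul133 lam x a = 0) ↔ a 0 = 0 ∧ a 1 = 0 := by
  refine ⟨fun h => ?_, fun ⟨h0, h1⟩ x => ⟨mul133_eq_zero_of_left lam h0 h1 x,
    mul133_eq_zero_of_right lam h0 h1 x⟩⟩
  have he₁ := (h (Pi.single 0 1)).1
  exact ⟨by simpa [mul133_eq] using congrFun he₁ 2, by simpa [mul133_eq] using congrFun he₁ 3⟩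

theorem image_piSingle_one_234 :
    (fun i => Pi.single i (1 : ℂ)) '' (({2, 3, 4} : Finset (Fin 5)) : Set (Fin 5)) =
      {Pi.single 2 1, Pi.single 3 1, Pi.single 4 1} := by
  simp [Set.image_insert_eq]

theorem mem_span_e345_iff {x : Fin 5 → ℂ} :
    x ∈ Submodule.span ℂ {Pi.single 2 1, Pi.single 3 1, Pi.single 4 1} ↔ x 0 = 0 ∧ x 1 = 0 := by
  rw [← image_piSingle_one_234, mem_span_image_piSingle_one_iff]
  refine ⟨fun h => ⟨h 0 (by decide), h 1 (by decide)⟩, fun ⟨h0, h1⟩ i hi => ?_⟩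
  fin_cases i <;> simp_all

theorem square133_eq :
    square133 lam = Submodule.span ℂ {Pi.single 2 1, Pi.single 3 1, Pi.single 4 1} := by
  refine le_antisymm (Submodule.span_le.2 ?_) (Submodule.span_le.2 ?_)
  · rintro _ ⟨x, y, rfl⟩
    exact mem_span_e345_iff.2 ⟨mul133_apply_zero lam x y, mul133_apply_one lam x y⟩
  · have mem_square {x y : Fin 5 → ℂ} : mul133 lam x y ∈ square133 lam :=
      Submodule.subset_span ⟨x, y, rfl⟩
    have e₁e₂ : mul133 lam (Pi.single 0 1) (Pi.single 1 1) = Pi.single 2 1 := by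
      ext m; fin_cases m <;> simp [mul133_eq]
    have e₂e₁ : mul133 lam (Pi.single 1 1) (Pi.single 0 1) = Pi.single 3 1 := by
      ext m; fin_cases m <;> simp [mul133_eq]
    have e₂e₂ : mul133 lam (Pi.single 1 1) (Pi.single 1 1) = Pi.single 4 1 := by
      ext m; fin_cases m <;> simp [mul133_eq]
    simp only [Set.insert_subset_iff, Set.singleton_subset_iff, SetLike.mem_coe]
    exact ⟨e₁e₂ ▸ mem_square, e₂e₁ ▸ mem_square, e₂e₂ ▸ mem_square⟩

end A133

/-- `A₁₃₃(λ)` is 2-step nilpotent, its square equals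
`span(e₃, e₄, e₅)` and has dimension `3`, and its annihilator equals its square. -/
theorem A133_two_step_square_ann (lam : ℂ) :
    (∀ x y z : Fin 5 → ℂ,
        mul133 lam (mul133 lam x y) z = 0 ∧ mul133 lam x (mul133 lam y z) = 0) ∧
    square133 lam = Submodule.span ℂ
      {(Pi.single 2 1 : Fin 5 → ℂ), (Pi.single 3 1 : Fin 5 → ℂ),
        (Pi.single 4 1 : Fin 5 → ℂ)} ∧
    finrank ℂ (square133 lam) = 3 ∧
    {a : Fin 5 → ℂ | ∀ x : Fin 5 → ℂ, mul133 lam a x = 0 ∧ mul133 lam x a = 0}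
      = (square133 lam : Set (Fin 5 → ℂ)) := by
  refine ⟨fun x y z => ⟨?_, ?_⟩, square133_eq lam, ?_, ?_⟩
  · exact mul133_eq_zero_of_left lam (mul133_apply_zero lam x y) (mul133_apply_one lam x y) z
  · exact mul133_eq_zero_of_right lam (mul133_apply_zero lam y z) (mul133_apply_one lam y z) x
  · rw [square133_eq, ← image_piSingle_one_234, finrank_span_image_piSingle_one]
    rfl
  · ext a
    rw [Set.mem_ofPred_eq, SetLike.mem_coe, square133_eq, mem_span_e345_iff,
      forall_mul133_eq_zero_iff]
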